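/- arXiv:math/0503672 — 2 statements merged into one kernel-verified Lean document; each statement's English description precedes it below -/
import Mathlib

section
/- For every real a ≥ 1/2, Γ(2a)/Γ(a)^2 ≤ 2^{2a−1} · √(a/π). -/
open Real

lemma gautschi_half (a : ℝ) (ha : 0 < a) :
    Real.Gamma (a + 1 / 2) ≤ Real.sqrt a * Real.Gamma a := by
  have hga : 0 < Real.Gamma a := Real.Gamma_pos_of_pos ha
  have hga1 : 0 < Real.Gamma (a + 1) := Real.Gamma_pos_of_pos (by linarith)
  have hgah : 0 < Real.Gamma (a + 1 / 2) := Real.Gamma_pos_of_pos (by linarith)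
  have hconv := Real.convexOn_log_Gamma.2 (Set.mem_Ioi.mpr ha)
    (Set.mem_Ioi.mpr (by linarith : (0:ℝ) < a + 1))
    (by norm_num : (0:ℝ) ≤ 1/2) (by norm_num : (0:ℝ) ≤ 1/2) (by norm_num)
  have heq : (1/2 : ℝ) • a + (1/2 : ℝ) • (a + 1) = a + 1/2 := by
    simp only [smul_eq_mul]; ring
  rw [heq] at hconv
  simp only [Function.comp_apply, smul_eq_mul] at hconv
  have h2 : Real.Gamma (a + 1/2) ≤ Real.exp (1/2 * Real.log (Real.Gamma a)
      + 1/2 * Real.log (Real.Gamma (a + 1))) := by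
    calc Real.Gamma (a + 1/2) = Real.exp (Real.log (Real.Gamma (a + 1/2))) :=
          (Real.exp_log hgah).symm
      _ ≤ _ := Real.exp_le_exp.mpr hconv
  have h3 : Real.exp (1/2 * Real.log (Real.Gamma a) + 1/2 * Real.log (Real.Gamma (a + 1)))
      = Real.sqrt (Real.Gamma a * Real.Gamma (a + 1)) := by
    rw [Real.sqrt_eq_rpow, Real.rpow_def_of_pos (by positivity), Real.log_mul hga.ne' hga1.ne']
    ring_nf
  rw [h3, Real.Gamma_add_one ha.ne'] at h2
  calc Real.Gamma (a + 1/2) ≤ Real.sqrt (Real.Gamma a * (a * Real.Gamma a)) := h2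
    _ = Real.sqrt a * Real.Gamma a := by
        rw [show Real.Gamma a * (a * Real.Gamma a) = a * (Real.Gamma a)^2 by ring,
          Real.sqrt_mul ha.le, Real.sqrt_sq hga.le]

theorem gamma_duplication_bound (a : ℝ) (ha : (1 : ℝ) / 2 ≤ a) :
    Real.Gamma (2 * a) / (Real.Gamma a) ^ 2 ≤
      (2 : ℝ) ^ (2 * a - 1) * Real.sqrt (a / π) := by
  have ha0 : 0 < a := lt_of_lt_of_le (by norm_num) ha
  have hga : 0 < Real.Gamma a := Real.Gamma_pos_of_pos ha0
  have hπ : 0 < Real.sqrt π := Real.sqrt_pos.mpr Real.pi_pos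
  have h2p : (0:ℝ) < (2:ℝ) ^ (1 - 2*a) := Real.rpow_pos_of_pos two_pos _
  have hdup := Real.Gamma_mul_Gamma_add_half a
  have hΓ2a : Real.Gamma (2 * a) = Real.Gamma a * Real.Gamma (a + 1/2)
      / ((2:ℝ) ^ (1 - 2*a) * Real.sqrt π) := by
    rw [eq_div_iff (by positivity)]
    rw [hdup]; ring
  have hr : (2:ℝ) ^ (2*a - 1) = ((2:ℝ) ^ (1 - 2*a))⁻¹ := by
    rw [show (2*a - 1 : ℝ) = -(1 - 2*a) by ring, Real.rpow_neg (by norm_num)]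
  have key := gautschi_half a ha0
  rw [hΓ2a]
  calc Real.Gamma a * Real.Gamma (a + 1/2) / ((2:ℝ) ^ (1 - 2*a) * Real.sqrt π)
        / (Real.Gamma a) ^ 2
      = (Real.Gamma (a + 1/2) / Real.Gamma a) / ((2:ℝ) ^ (1 - 2*a) * Real.sqrt π) := by
        field_simp
    _ ≤ Real.sqrt a / ((2:ℝ) ^ (1 - 2*a) * Real.sqrt π) := by
        gcongr
        exact (div_le_iff₀ hga).mpr key
    _ = (2 : ℝ) ^ (2 * a - 1) * Real.sqrt (a / π) := by
        rw [Real.sqrt_div ha0.le, hr]; field_simp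
end

section
/- Let (M_N, F_N) be a martingale with M_N = Σ_{n=1}^N Y_n where Y_n is F_n-measurable, E[Y_n | F_{n−1}] = 0, and Σ_n n^{−2} Var(Y_n) < ∞. Then M_N / N → 0 almost surely. -/
open MeasureTheory ProbabilityTheory Filter Topology
open scoped ENNReal NNReal

private lemma kronecker_abel (a : ℕ → ℝ) (N : ℕ) :
    ∑ n ∈ Finset.Icc 1 N, a n =
      N * (∑ n ∈ Finset.Icc 1 N, (n : ℝ)⁻¹ * a n)
        - ∑ m ∈ Finset.range N, ∑ n ∈ Finset.Icc 1 m, (n : ℝ)⁻¹ * a n := by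
  induction N with
  | zero => simp
  | succ N ih =>
    rw [Finset.sum_Icc_succ_top (by omega), Finset.sum_range_succ,
      Finset.sum_Icc_succ_top (by omega : 1 ≤ N + 1), ih]
    have h : ((N : ℝ) + 1) ≠ 0 := by positivity
    push_cast
    field_simp
    ring

private lemma kronecker {a : ℕ → ℝ} {L : ℝ}
    (h : Tendsto (fun N : ℕ => ∑ n ∈ Finset.Icc 1 N, (n : ℝ)⁻¹ * a n) atTop (𝓝 L)) :
    Tendsto (fun N : ℕ => (∑ n ∈ Finset.Icc 1 N, a n) / N) atTop (𝓝 0) := by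
  have hces := h.cesaro
  have hsub := h.sub hces
  rw [sub_self] at hsub
  apply hsub.congr'
  filter_upwards [eventually_ge_atTop 1] with N hN
  have hN0 : (N : ℝ) ≠ 0 := by positivity
  rw [kronecker_abel a N, sub_div, mul_div_cancel_left₀ _ hN0, div_eq_inv_mul]

theorem martingale_slln {Ω : Type*} {m0 : MeasurableSpace Ω} (P : Measure Ω)
    [IsProbabilityMeasure P] (ℱ : Filtration ℕ m0) (Y : ℕ → Ω → ℝ)
    (hadapted : ∀ n, StronglyMeasurable[ℱ n] (Y n))
    (hL2 : ∀ n, MemLp (Y n) 2 P)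
    (hcond : ∀ n, P[Y (n + 1)|ℱ n] =ᵐ[P] 0)
    (hvar : Summable fun n : ℕ => ((n : ℝ) ^ 2)⁻¹ * variance (Y n) P) :
    ∀ᵐ ω ∂P, Tendsto (fun N : ℕ => (∑ n ∈ Finset.Icc 1 N, Y n ω) / N)
      atTop (nhds 0) := by
  classical
  set S : ℕ → Ω → ℝ := fun N ω => ∑ n ∈ Finset.Icc 1 N, (n : ℝ)⁻¹ * Y n ω with hSdef
  have hint : ∀ n, Integrable (Y n) P := fun n => (hL2 n).integrable one_le_two
  have hSL2 : ∀ N, MemLp (S N) 2 P := by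
    intro N
    have heq : S N = ∑ i ∈ Finset.Icc 1 N, fun ω => (i : ℝ)⁻¹ * Y i ω := by
      funext ω; simp [hSdef]
    rw [heq]
    exact memLp_finsetSum' _ fun n _ => ((hL2 n).const_mul _)
  have hSint : ∀ N, Integrable (S N) P := fun N => (hSL2 N).integrable one_le_two
  have hadp : StronglyAdapted ℱ S := by
    intro N
    apply Finset.stronglyMeasurable_fun_sum
    intro n hn
    exact (StronglyMeasurable.mono (hadapted n) (ℱ.mono (Finset.mem_Icc.1 hn).2)).const_mul _
  -- martingale property
  have hmart : Martingale S ℱ P := by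
    refine martingale_nat hadp hSint fun i => ?_
    have hstep : S (i + 1) = S i + ((i + 1 : ℕ) : ℝ)⁻¹ • Y (i + 1) := by
      funext ω
      simp only [hSdef, Pi.add_apply, Pi.smul_apply, smul_eq_mul,
        Finset.sum_Icc_succ_top (show 1 ≤ i + 1 by omega)]
    rw [hstep]
    have h1 := condExp_add (m := ℱ i) (hSint i) ((hint (i + 1)).smul (((i + 1 : ℕ) : ℝ)⁻¹))
    have h2 := condExp_smul (m := ℱ i) (μ := P) (((i + 1 : ℕ) : ℝ)⁻¹) (Y (i + 1))
    refine EventuallyEq.symm (h1.trans ?_)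
    have h3 : P[S i|ℱ i] = S i :=
      condExp_of_stronglyMeasurable (ℱ.le i) (hadp i) (hSint i)
    rw [h3]
    filter_upwards [h2, hcond i] with ω hω2 hω0
    simp only [Pi.add_apply]
    rw [hω2]
    simp [hω0]
  -- zero means
  have hmean : ∀ n, ∫ ω, Y (n + 1) ω ∂P = 0 := by
    intro n
    rw [← integral_condExp (ℱ.le n), integral_congr_ae (hcond n)]
    simp
  -- products integrable
  have hmulint : ∀ i j, Integrable (fun ω => Y i ω * Y j ω) P := by
    intro i j
    refine Integrable.mono' ((hL2 i).integrable_sq.add (hL2 j).integrable_sq)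
      ((hint i).1.mul (hint j).1) ?_
    filter_upwards with ω
    simp only [Pi.add_apply, norm_mul, Real.norm_eq_abs]
    nlinarith [sq_nonneg (|Y i ω| - |Y j ω|), sq_abs (Y i ω), sq_abs (Y j ω),
      abs_nonneg (Y i ω), abs_nonneg (Y j ω)]
  -- orthogonality
  have hcross : ∀ i j, i < j → ∫ ω, Y i ω * Y j ω ∂P = 0 := by
    intro i j hij
    obtain ⟨k, rfl⟩ : ∃ k, j = k + 1 := ⟨j - 1, by omega⟩
    have hik : i ≤ k := by omega
    have hmul : Integrable (Y i * Y (k + 1)) P := hmulint i (k + 1)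
    have h1 : P[Y i * Y (k + 1)|ℱ k] =ᵐ[P] Y i * P[Y (k + 1)|ℱ k] :=
      condExp_mul_of_stronglyMeasurable_left ((hadapted i).mono (ℱ.mono hik)) hmul (hint (k + 1))
    have h2 : P[Y i * Y (k + 1)|ℱ k] =ᵐ[P] 0 := by
      refine h1.trans ?_
      filter_upwards [hcond k] with ω hω
      simp [hω]
    calc ∫ ω, Y i ω * Y (k + 1) ω ∂P
        = ∫ ω, (P[Y i * Y (k + 1)|ℱ k]) ω ∂P := (integral_condExp (ℱ.le k)).symm
      _ = 0 := by rw [integral_congr_ae h2]; simp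
  have hcross' : ∀ i j, i ≠ j → ∫ ω, Y i ω * Y j ω ∂P = 0 := by
    intro i j hij
    rcases lt_or_gt_of_ne hij with h | h
    · exact hcross i j h
    · simpa only [mul_comm] using hcross j i h
  -- diagonal
  have hdiag : ∀ n, 1 ≤ n → ∫ ω, Y n ω * Y n ω ∂P = variance (Y n) P := by
    intro n hn
    obtain ⟨k, rfl⟩ : ∃ k, n = k + 1 := ⟨n - 1, by omega⟩
    rw [variance_eq_sub (hL2 _)]
    have : P[Y (k + 1)] = 0 := hmean k
    rw [this]
    simp only [ne_eq, OfNat.ofNat_ne_zero, not_false_eq_true, zero_pow, sub_zero]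
    congr 1
    funext
    simp [sq]
  set C : ℝ := ∑' n : ℕ, ((n : ℝ) ^ 2)⁻¹ * variance (Y n) P with hC
  have hS2 : ∀ N, ∫ ω, (S N ω) ^ 2 ∂P ≤ C := by
    intro N
    have hexpand : ∀ ω, (S N ω) ^ 2 = ∑ i ∈ Finset.Icc 1 N, ∑ j ∈ Finset.Icc 1 N,
        ((i : ℝ)⁻¹ * (j : ℝ)⁻¹) * (Y i ω * Y j ω) := by
      intro ω
      simp only [hSdef]
      rw [sq, Finset.sum_mul_sum]
      exact Finset.sum_congr rfl fun i _ => Finset.sum_congr rfl fun j _ => by ring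
    have hswap : ∫ ω, (S N ω) ^ 2 ∂P = ∑ i ∈ Finset.Icc 1 N, ∑ j ∈ Finset.Icc 1 N,
        ((i : ℝ)⁻¹ * (j : ℝ)⁻¹) * ∫ ω, Y i ω * Y j ω ∂P := by
      rw [integral_congr_ae (Filter.Eventually.of_forall hexpand),
        integral_finset_sum _ fun i _ =>
          integrable_finset_sum _ fun j _ => ((hmulint i j).const_mul _)]
      refine Finset.sum_congr rfl fun i _ => ?_
      rw [integral_finset_sum _ fun j _ => ((hmulint i j).const_mul _)]
      exact Finset.sum_congr rfl fun j _ => integral_const_mul _ _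
    rw [hswap]
    have hdiagsum : ∀ i ∈ Finset.Icc 1 N,
        (∑ j ∈ Finset.Icc 1 N, ((i : ℝ)⁻¹ * (j : ℝ)⁻¹) * ∫ ω, Y i ω * Y j ω ∂P)
          = ((i : ℝ) ^ 2)⁻¹ * variance (Y i) P := by
      intro i hi
      rw [Finset.sum_eq_single i]
      · rw [hdiag i (Finset.mem_Icc.1 hi).1, ← mul_inv, ← sq]
      · intro j _ hji
        rw [hcross' i j (Ne.symm hji), mul_zero]
      · intro h; exact absurd hi h
    rw [Finset.sum_congr rfl hdiagsum]
    exact Summable.sum_le_tsum _ (fun n _ => mul_nonneg (by positivity) (variance_nonneg _ _)) hvar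
  have hub : ∀ N, eLpNorm (S N) 1 P ≤ ENNReal.ofReal ((C + 1) / 2) := by
    intro N
    rw [eLpNorm_one_eq_lintegral_enorm, ← ofReal_integral_norm_eq_lintegral_enorm (hSint N)]
    apply ENNReal.ofReal_le_ofReal
    have h1 : ∫ ω, ‖S N ω‖ ∂P ≤ ∫ ω, ((S N ω) ^ 2 + 1) / 2 ∂P := by
      apply integral_mono (hSint N).norm
        (((hSL2 N).integrable_sq.add (integrable_const 1)).div_const 2)
      intro ω
      simp only [Real.norm_eq_abs, Pi.add_apply]
      nlinarith [sq_nonneg (|S N ω| - 1), sq_abs (S N ω), abs_nonneg (S N ω)]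
    have h2 : ∫ ω, ((S N ω) ^ 2 + 1) / 2 ∂P = ((∫ ω, (S N ω) ^ 2 ∂P) + 1) / 2 := by
      rw [integral_div, integral_add (hSL2 N).integrable_sq (integrable_const 1)]
      simp
    linarith [hS2 N]
  have hbdd : ∀ n, eLpNorm (S n) 1 P ≤ (((C + 1) / 2).toNNReal : ℝ≥0∞) := fun n => hub n
  filter_upwards [hmart.submartingale.ae_tendsto_limitProcess hbdd] with ω hω
  exact kronecker hω
end
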